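/- The HLL rule M (frame rule) is admissible: if the Horn sequent X, Γ, !Δ ⊢ Y is derivable in intuitionistic linear logic, then so is (X ⊗ V), Γ, !Δ ⊢ (Y ⊗ V), for any simple product V. -/
import Mathlib


/-- Formulas of propositional linear logic over atoms `α`,
built from atoms with ⊗, ⊸, ⊕ and !. -/
inductive Fm (α : Type) : Type
  | atom : α → Fm α
  | tens : Fm α → Fm α → Fm α
  | lolli : Fm α → Fm α → Fm α
  | oplus : Fm α → Fm α → Fm α
  | bang : Fm α → Fm α
deriving DecidableEq

/-- Derivability in the intuitionistic linear sequent calculus: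
multiset antecedent, at most one succedent formula (`none` = empty succedent). -/
inductive Deriv {α : Type} : Multiset (Fm α) → Option (Fm α) → Prop
  | id (A : Fm α) : Deriv {A} (some A)
  | cut {Γ Δ : Multiset (Fm α)} {A : Fm α} {C : Option (Fm α)} :
      Deriv Γ (some A) → Deriv (A ::ₘ Δ) C → Deriv (Γ + Δ) C
  | tensL {Γ : Multiset (Fm α)} {A B : Fm α} {C : Option (Fm α)} :
      Deriv (A ::ₘ B ::ₘ Γ) C → Deriv (Fm.tens A B ::ₘ Γ) C
  | tensR {Γ Δ : Multiset (Fm α)} {A B : Fm α} :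
      Deriv Γ (some A) → Deriv Δ (some B) → Deriv (Γ + Δ) (some (Fm.tens A B))
  | lolliL {Γ Δ : Multiset (Fm α)} {A B : Fm α} {C : Option (Fm α)} :
      Deriv Γ (some A) → Deriv (B ::ₘ Δ) C → Deriv (Fm.lolli A B ::ₘ (Γ + Δ)) C
  | lolliR {Γ : Multiset (Fm α)} {A B : Fm α} :
      Deriv (A ::ₘ Γ) (some B) → Deriv Γ (some (Fm.lolli A B))
  | oplusL {Γ : Multiset (Fm α)} {A B : Fm α} {C : Option (Fm α)} :
      Deriv (A ::ₘ Γ) C → Deriv (B ::ₘ Γ) C → Deriv (Fm.oplus A B ::ₘ Γ) C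
  | oplusR₁ {Γ : Multiset (Fm α)} {A B : Fm α} :
      Deriv Γ (some A) → Deriv Γ (some (Fm.oplus A B))
  | oplusR₂ {Γ : Multiset (Fm α)} {A B : Fm α} :
      Deriv Γ (some B) → Deriv Γ (some (Fm.oplus A B))
  | bangL {Γ : Multiset (Fm α)} {A : Fm α} {C : Option (Fm α)} :
      Deriv (A ::ₘ Γ) C → Deriv (Fm.bang A ::ₘ Γ) C
  | bangW {Γ : Multiset (Fm α)} {A : Fm α} {C : Option (Fm α)} :
      Deriv Γ C → Deriv (Fm.bang A ::ₘ Γ) C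
  | bangC {Γ : Multiset (Fm α)} {A : Fm α} {C : Option (Fm α)} :
      Deriv (Fm.bang A ::ₘ Fm.bang A ::ₘ Γ) C → Deriv (Fm.bang A ::ₘ Γ) C
  | bangR {Γ : Multiset (Fm α)} {A : Fm α} :
      (∀ B ∈ Γ, ∃ B', B = Fm.bang B') →
      Deriv Γ (some A) → Deriv Γ (some (Fm.bang A))

/-- Simple products: tensor products of (a positive number of) positive literals. -/
inductive Simple {α : Type} : Fm α → Prop
  | atom (a : α) : Simple (Fm.atom a)
  | tens {X Y : Fm α} : Simple X → Simple Y → Simple (Fm.tens X Y)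

/-- Horn implications `X ⊸ Y` with `X`, `Y` simple products. -/
def IsHorn {α : Type} (A : Fm α) : Prop :=
  ∃ X Y : Fm α, Simple X ∧ Simple Y ∧ A = Fm.lolli X Y

/-- ⊕-Horn implications `X ⊸ (Y₁ ⊕ Y₂)` with `X`, `Y₁`, `Y₂` simple products. -/
def IsOHorn {α : Type} (A : Fm α) : Prop :=
  ∃ X Y₁ Y₂ : Fm α, Simple X ∧ Simple Y₁ ∧ Simple Y₂ ∧
    A = Fm.lolli X (Fm.oplus Y₁ Y₂)

/-- admissibility of the HLL frame rule M:
if `X, Γ, !Δ ⊢ Y` is derivable in intuitionistic linear logic,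
then so is `(X ⊗ V), Γ, !Δ ⊢ (Y ⊗ V)` for any simple product `V`. -/
theorem frame_rule_admissible {α : Type}
    (X Y V : Fm α) (Γ Δ : Multiset (Fm α))
    (hX : Simple X) (hY : Simple Y) (hV : Simple V)
    (hΓ : ∀ A ∈ Γ, IsHorn A ∨ IsOHorn A)
    (hΔ : ∀ A ∈ Δ, IsHorn A ∨ IsOHorn A)
    (h : Deriv (X ::ₘ (Γ + Δ.map Fm.bang)) (some Y)) :
    Deriv (Fm.tens X V ::ₘ (Γ + Δ.map Fm.bang)) (some (Fm.tens Y V)) := by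
  apply Deriv.tensL
  have := Deriv.tensR h (Deriv.id V)
  have e : (X ::ₘ (Γ + Δ.map Fm.bang)) + {V}
      = X ::ₘ V ::ₘ (Γ + Δ.map Fm.bang) := by
    simp only [Multiset.cons_add]
    rw [add_comm, Multiset.singleton_add]
  rwa [e] at this
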